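/- For a real parameter a, define polynomials Q_m(a,·) in z by Q_0(a,z) = 1/2 and, for m ≥ 1, Q_m(a,z) = (m+1)·a·z·Q_{m−1}(a,z) + z·(1 − a·z)·∂_z Q_{m−1}(a,z). Then for every integer m ≥ 0 and every real z with |z| < 1, ∑_{n=0}^∞ 4^n n^m z^n/((2n+1)·C_n) = ∫_{−1}^1 Q_m(1−x^2, z) / (1 − z(1−x^2))^{m+2} dx. -/

import Mathlib

/-!
Since `4^n / ((2n+1) C_n) = (n+1)/2 · ∫_{-1}^1 (1-x²)^n dx` (a Beta integral), dominated
convergence turns the series into `∫_{-1}^1 ∑_n (n+1) n^m (z(1-x²))^n / 2 dx`. The inner series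
is `Q_m(1,w) / (1-w)^(m+2)` at `w = z(1-x²)`: for `m = 0` it is geometric, and each application
of the Euler operator `w d/dw`, done termwise, multiplies the coefficients by `n` and realises
the recursion defining `Q_{m+1}`. Finally `Q_m(a,z) = Q_m(1,az)`.
-/

open Polynomial

/-- For a real parameter `a`, the polynomial `Q_m(a,·)` in `z` defined by
`Q_0(a,z) = 1/2` and, for `m ≥ 1`,
`Q_m(a,z) = (m+1)·a·z·Q_{m-1}(a,z) + z·(1-a·z)·∂_z Q_{m-1}(a,z)`. -/
noncomputable def catalanQ (a : ℝ) : ℕ → Polynomial ℝ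
  | 0 => C (1 / 2)
  | m + 1 =>
      C ((m : ℝ) + 2) * C a * X * catalanQ a m
        + X * (1 - C a * X) * derivative (catalanQ a m)

open Nat

theorem catalanQ_succ (a : ℝ) (m : ℕ) :
    catalanQ a (m + 1) = C ((m : ℝ) + 2) * C a * X * catalanQ a m
      + X * (1 - C a * X) * derivative (catalanQ a m) := rfl

theorem catalanQ_eq_comp (a : ℝ) (m : ℕ) : catalanQ a m = (catalanQ 1 m).comp (C a * X) := by
  induction m with
  | zero => simp [catalanQ]
  | succ m ih =>
    simp only [catalanQ_succ, ih, derivative_comp, add_comp, mul_comp, sub_comp, one_comp, X_comp,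
      C_comp, derivative_mul, derivative_C, derivative_X, map_one]
    ring

theorem eval_catalanQ (a z : ℝ) (m : ℕ) :
    (catalanQ a m).eval z = (catalanQ 1 m).eval (a * z) := by
  simp [catalanQ_eq_comp a m]

theorem hasDerivAt_eval_div_one_sub_pow (P : ℝ[X]) (k : ℕ) {w : ℝ} (hw : w ≠ 1) :
    HasDerivAt (fun y => P.eval y / (1 - y) ^ k)
      ((P.derivative.eval w * (1 - w) + k * P.eval w) / (1 - w) ^ (k + 1)) w := by
  have hw' : 1 - w ≠ 0 := sub_ne_zero.2 hw.symm
  refine ((P.hasDerivAt w).div (((hasDerivAt_id' w).const_sub 1).pow k)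
    (pow_ne_zero k hw')).congr_deriv ?_
  simp only [Pi.pow_apply]
  rcases k with _ | k
  · simp [mul_div_cancel_right₀ _ hw']
  · field_simp
    push_cast
    ring

theorem hasSum_coe_mul_mul_pow_of_hasDerivAt {a : ℕ → ℝ} {F : ℝ → ℝ} {F' w : ℝ}
    (ha : ∀ r : ℝ, 0 < r → r < 1 → Summable fun n => n * |a n| * r ^ n)
    (hF : ∀ y : ℝ, |y| < 1 → HasSum (fun n => a n * y ^ n) (F y))
    (hF' : HasDerivAt F F' w) (hw : |w| < 1) :
    HasSum (fun n => n * a n * w ^ n) (w * F') := by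
  obtain ⟨r, hwr, hr1⟩ := exists_between hw
  have hr0 : 0 < r := (abs_nonneg w).trans_lt hwr
  have hball : ∀ y ∈ Metric.ball (0 : ℝ) r, |y| < r := fun y hy => by
    simpa [Real.dist_eq] using hy
  have hw_mem : w ∈ Metric.ball (0 : ℝ) r := by simpa [Real.dist_eq] using hwr
  have hbound : ∀ n, ∀ y ∈ Metric.ball (0 : ℝ) r,
      ‖a n * (n * y ^ (n - 1))‖ ≤ n * |a n| * r ^ n / r := by
    rintro (_ | n) y hy
    · simp
    · rw [Real.norm_eq_abs, abs_mul, abs_mul, abs_pow, Nat.abs_cast, pow_succ, mul_div_assoc,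
        mul_div_cancel_right₀ _ hr0.ne', Nat.add_sub_cancel, mul_left_comm, ← mul_assoc]
      gcongr
      exact (hball y hy).le
  have hderiv : HasDerivAt (fun y => ∑' n, a n * y ^ n) (∑' n, a n * (n * w ^ (n - 1))) w :=
    hasDerivAt_tsum_of_isPreconnected ((ha r hr0 hr1).div_const r) Metric.isOpen_ball
      (convex_ball 0 r).isPreconnected (fun n y _ => (hasDerivAt_pow n y).const_mul (a n))
      hbound hw_mem (hF w hw).summable hw_mem
  have hF_eq : (fun y => ∑' n, a n * y ^ n) =ᶠ[nhds w] F := by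
    filter_upwards [Metric.isOpen_ball.mem_nhds hw_mem] with y hy
    exact (hF y ((hball y hy).trans hr1)).tsum_eq
  have hsum : HasSum (fun n => a n * (n * w ^ (n - 1))) F' := by
    rw [← (hderiv.congr_of_eventuallyEq hF_eq.symm).unique hF']
    exact (Summable.of_norm_bounded ((ha r hr0 hr1).div_const r) (hbound · w hw_mem)).hasSum
  refine (hsum.mul_left w).congr_fun fun n => ?_
  rcases n with _ | n
  · simp
  · rw [Nat.add_sub_cancel, pow_succ]
    ring

theorem hasSum_succ_mul_pow_mul_pow_div_two (m : ℕ) {w : ℝ} (hw : |w| < 1) :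
    HasSum (fun n : ℕ => ((n : ℝ) + 1) * n ^ m * w ^ n / 2)
      ((catalanQ 1 m).eval w / (1 - w) ^ (m + 2)) := by
  have hw1 : w ≠ 1 := (lt_of_abs_lt hw).ne
  induction m generalizing w with
  | zero =>
    have hw' : ‖w‖ < 1 := by rwa [Real.norm_eq_abs]
    have hgeom := ((hasSum_coe_mul_geometric_of_norm_lt_one hw').add
      (hasSum_geometric_of_norm_lt_one hw')).div_const 2
    have hvalue : (catalanQ 1 0).eval w / (1 - w) ^ (0 + 2)
        = (w / (1 - w) ^ 2 + (1 - w)⁻¹) / 2 := by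
      have : 1 - w ≠ 0 := sub_ne_zero.2 hw1.symm
      simp only [catalanQ, eval_C, zero_add]
      field_simp
      ring
    rw [hvalue]
    exact hgeom.congr_fun fun n => by ring
  | succ m ih =>
    have hsummable (r : ℝ) (hr0 : 0 < r) (hr1 : r < 1) :
        Summable fun n : ℕ => n * |((n : ℝ) + 1) * n ^ m / 2| * r ^ n := by
      have hr : ‖r‖ < 1 := by rwa [Real.norm_eq_abs, abs_of_pos hr0]
      refine (((summable_pow_mul_geometric_of_norm_lt_one (m + 2) hr).add
        (summable_pow_mul_geometric_of_norm_lt_one (m + 1) hr)).div_const 2).congr fun n => ?_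
      rw [abs_of_nonneg (by positivity)]
      ring
    have hsum := hasSum_coe_mul_mul_pow_of_hasDerivAt hsummable
      (fun y hy => (ih hy (lt_of_abs_lt hy).ne).congr_fun fun n => by ring)
      (hasDerivAt_eval_div_one_sub_pow (catalanQ 1 m) (m + 2) hw1) hw
    have heuler : (catalanQ 1 (m + 1)).eval w / (1 - w) ^ (m + 1 + 2)
        = w * (((catalanQ 1 m).derivative.eval w * (1 - w)
          + ((m + 2 : ℕ) : ℝ) * (catalanQ 1 m).eval w) / (1 - w) ^ (m + 2 + 1)) := by
      simp only [catalanQ_succ, eval_add, eval_mul, eval_C, eval_X, eval_sub, eval_one, map_one]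
      push_cast
      ring
    rw [heuler]
    exact hsum.congr_fun fun n => by ring

theorem integral_pow_mul_one_sub_pow (m n : ℕ) :
    ∫ x in (0 : ℝ)..1, x ^ m * (1 - x) ^ n = (m ! * n ! : ℝ) / (m + n + 1)! := by
  have hre : 0 < ((m : ℂ) + 1).re := by
    simp only [Complex.add_re, Complex.natCast_re, Complex.one_re]
    positivity
  have hbeta := Complex.betaIntegral_eval_nat_add_one_right hre n
  have hint : Complex.betaIntegral (m + 1) (n + 1)
      = ((∫ x in (0 : ℝ)..1, x ^ m * (1 - x) ^ n : ℝ) : ℂ) := by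
    rw [Complex.betaIntegral, ← intervalIntegral.integral_ofReal]
    refine intervalIntegral.integral_congr fun x _ => ?_
    simp only [add_sub_cancel_right, Complex.cpow_natCast]
    push_cast
    ring
  have hprod : ∏ j ∈ Finset.range (n + 1), ((m : ℂ) + 1 + j)
      = ((m + 1).ascFactorial (n + 1) : ℂ) := by
    rw [ascFactorial_eq_prod_range]
    push_cast
    ring_nf
  have hfact : (m ! : ℂ) * (m + 1).ascFactorial (n + 1) = (m + n + 1)! := by
    exact_mod_cast factorial_mul_ascFactorial m (n + 1)
  have hm : (m ! : ℂ) ≠ 0 := by exact_mod_cast m.factorial_ne_zero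
  rw [hint, hprod] at hbeta
  rw [← Complex.ofReal_inj, hbeta]
  push_cast
  rw [← hfact]
  field_simp

theorem integral_one_sub_sq_pow (n : ℕ) :
    ∫ x in (-1 : ℝ)..1, (1 - x ^ 2) ^ n = 2 * 4 ^ n * (n ! * n ! : ℝ) / (2 * n + 1)! := by
  have h := intervalIntegral.integral_comp_mul_add (a := 0) (b := 1)
    (fun x : ℝ => (1 - x ^ 2) ^ n) two_ne_zero (-1)
  have hsub : ∫ x in (0 : ℝ)..1, (1 - (2 * x + -1) ^ 2) ^ n
      = 4 ^ n * ∫ x in (0 : ℝ)..1, x ^ n * (1 - x) ^ n := by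
    rw [← intervalIntegral.integral_const_mul]
    refine intervalIntegral.integral_congr fun x _ => ?_
    rw [show 1 - (2 * x + -1) ^ 2 = 4 * (x * (1 - x)) by ring, mul_pow, mul_pow]
  norm_num [hsub, integral_pow_mul_one_sub_pow] at h
  rw [← two_mul] at h
  linear_combination -2 * h

theorem factorial_two_mul_add_one (n : ℕ) :
    (2 * n + 1)! = (2 * n + 1) * ((n + 1) * catalan n) * (n ! * n !) := by
  have h := choose_mul_factorial_mul_factorial (n := 2 * n) (k := n) (by omega)
  rw [show 2 * n - n = n by omega] at h
  rw [succ_mul_catalan_eq_centralBinom, centralBinom, factorial_succ, ← h]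
  ring

theorem four_pow_div_mul_catalan (n : ℕ) :
    4 ^ n / ((2 * n + 1) * catalan n : ℝ)
      = (n + 1) / 2 * ∫ x in (-1 : ℝ)..1, (1 - x ^ 2) ^ n := by
  have hcat : (catalan n : ℝ) ≠ 0 := by
    have := centralBinom_ne_zero n
    rw [← succ_mul_catalan_eq_centralBinom] at this
    exact_mod_cast right_ne_zero_of_mul this
  rw [integral_one_sub_sq_pow, factorial_two_mul_add_one]
  push_cast
  field_simp

theorem abs_mul_one_sub_sq_le (z : ℝ) {x : ℝ} (hx : x ∈ Set.uIoc (-1 : ℝ) 1) :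
    |z * (1 - x ^ 2)| ≤ |z| := by
  rw [Set.uIoc_of_le (by norm_num)] at hx
  rw [abs_mul]
  exact mul_le_of_le_one_right (abs_nonneg z)
    (abs_le.2 ⟨by nlinarith [hx.1, hx.2], by nlinarith⟩)

/-- Theorem 6 of the paper: for every `m ≥ 0` and `|z| < 1`,
`∑_{n=0}^∞ 4^n n^m z^n/((2n+1)·C_n) = ∫_{-1}^1 Q_m(1-x², z)/(1-z(1-x²))^{m+2} dx`. -/
theorem g_m_integral_rep (m : ℕ) (z : ℝ) (hz : |z| < 1) :
    ∑' n : ℕ, 4 ^ n * (n : ℝ) ^ m * z ^ n / ((2 * (n : ℝ) + 1) * (catalan n : ℝ))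
      = ∫ x in (-1 : ℝ)..1,
          (catalanQ (1 - x ^ 2) m).eval z / (1 - z * (1 - x ^ 2)) ^ (m + 2) := by
  set F : ℕ → ℝ → ℝ := fun n x => ((n : ℝ) + 1) * n ^ m * (z * (1 - x ^ 2)) ^ n / 2
  have hterm (n : ℕ) : 4 ^ n * (n : ℝ) ^ m * z ^ n / ((2 * (n : ℝ) + 1) * (catalan n : ℝ))
      = ∫ x in (-1 : ℝ)..1, F n x := by
    rw [show (4 : ℝ) ^ n * n ^ m * z ^ n / ((2 * n + 1) * catalan n)
        = n ^ m * z ^ n * (4 ^ n / ((2 * n + 1) * catalan n)) by ring, four_pow_div_mul_catalan]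
    simp only [F, mul_pow, intervalIntegral.integral_div, intervalIntegral.integral_const_mul]
    ring
  rw [tsum_congr hterm]
  refine (intervalIntegral.hasSum_integral_of_dominated_convergence (F := F)
    (fun n _ => ((n : ℝ) + 1) * n ^ m * |z| ^ n / 2) (fun n => by fun_prop) ?_ ?_ ?_ ?_).tsum_eq
  · refine fun n => .of_forall fun x hx => ?_
    simp only [F, norm_div, norm_mul, norm_pow, Real.norm_eq_abs, abs_two, Nat.abs_cast]
    rw [abs_of_nonneg (by positivity), ← abs_mul]
    have := pow_le_pow_left₀ (abs_nonneg _) (abs_mul_one_sub_sq_le z hx) n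
    gcongr
  · exact .of_forall fun _ _ =>
      (hasSum_succ_mul_pow_mul_pow_div_two m (by rwa [abs_abs])).summable
  · exact intervalIntegrable_const
  · refine .of_forall fun x hx => ?_
    rw [eval_catalanQ, mul_comm _ z]
    exact hasSum_succ_mul_pow_mul_pow_div_two m ((abs_mul_one_sub_sq_le z hx).trans_lt hz)
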